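/- arXiv:1505.06096 — 3 statements merged into one kernel-verified Lean document; each statement's English description precedes it below -/
import Mathlib

section
/- Every induced matching in the whiskered cycle W(C_n) has cardinality at most ⌈(n-1)/2⌉. -/
/-- The whiskered cycle `W(C_n)`. -/
def whiskerCycle (n : ℕ) [NeZero n] : SimpleGraph (Fin n ⊕ Fin n) :=
  SimpleGraph.fromRel (fun a b =>
    (∃ i : Fin n, a = Sum.inl i ∧ b = Sum.inl (i + 1)) ∨
    (∃ i : Fin n, a = Sum.inl i ∧ b = Sum.inr i))

/-- A set of edges is an induced matching if no two distinct edges of it share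
a vertex and no edge of the graph joins endpoints of two distinct edges of it. -/
def IsInducedMatching {V : Type*} (G : SimpleGraph V) (M : Set (Sym2 V)) : Prop :=
  M ⊆ G.edgeSet ∧
    ∀ e ∈ M, ∀ f ∈ M, e ≠ f → ∀ u ∈ e, ∀ v ∈ f, u ≠ v ∧ ¬ G.Adj u v

/-!
Every edge of `W(C_n)` contains a cycle vertex. Choosing one cycle vertex in each edge of an
induced matching gives an independent set of the cycle `C_n` of the same size: distinct edges
get distinct vertices since the edges are disjoint, and the chosen vertices are pairwise
non-adjacent since the matching is induced. An independent set `S` of `C_n` is disjoint from its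
shift `S + 1`, so `2 |S| ≤ n`, and `⌊n / 2⌋ ≤ ⌈(n - 1) / 2⌉`.
-/

open Sum

theorem Set.two_mul_ncard_le_of_disjoint_image {α : Type*} [Finite α] {f : α → α}
    (hf : Function.Injective f) {S : Set α} (hS : Disjoint S (f '' S)) :
    2 * S.ncard ≤ Nat.card α :=
  calc 2 * S.ncard = (S ∪ f '' S).ncard := by
        rw [Set.ncard_union_eq hS, Set.ncard_image_of_injective S hf, two_mul]
    _ ≤ Nat.card α := Set.ncard_le_card _

theorem Nat.le_ceil_sub_one_div_two {m n : ℕ} (h : 2 * m ≤ n) :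
    m ≤ ⌈((n : ℚ) - 1) / 2⌉₊ := by
  rcases m with _ | m
  · exact Nat.zero_le _
  · have h' : (2 * (m + 1) : ℚ) ≤ n := by exact_mod_cast h
    exact Nat.lt_ceil.mpr (by linarith)

theorem IsInducedMatching.exists_isIndepSet_subset_ncard_eq {V : Type*} {G : SimpleGraph V}
    {M : Set (Sym2 V)} (hM : IsInducedMatching G M) {C : Set V}
    (hC : ∀ e ∈ G.edgeSet, ∃ v ∈ C, v ∈ e) :
    ∃ I ⊆ C, G.IsIndepSet I ∧ I.ncard = M.ncard := by
  choose φ hφC hφe using fun e : M => hC e (hM.1 e.2)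
  have hne {e f : M} (h : e ≠ f) :=
    hM.2 e e.2 f f.2 (Subtype.coe_ne_coe.mpr h) _ (hφe e) _ (hφe f)
  have hinj : Function.Injective φ := fun e f hef => of_not_not fun h => (hne h).1 hef
  refine ⟨Set.range φ, Set.range_subset_iff.mpr hφC, ?_, ?_⟩
  · rintro _ ⟨e, rfl⟩ _ ⟨f, rfl⟩ hef
    exact (hne fun h => hef (congrArg φ h)).2
  · rw [Set.ncard_range_of_injective hinj, Nat.card_coe_set_eq]

namespace whiskerCycle

variable {n : ℕ} [NeZero n]

theorem exists_inl_mem_of_mem_edgeSet {e : Sym2 (Fin n ⊕ Fin n)}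
    (he : e ∈ (whiskerCycle n).edgeSet) : ∃ v ∈ Set.range inl, v ∈ e := by
  induction e using Sym2.ind with
  | _ a b =>
    obtain ⟨-, (⟨i, rfl, -⟩ | ⟨i, rfl, -⟩) | (⟨i, rfl, -⟩ | ⟨i, rfl, -⟩)⟩ := he
    all_goals exact ⟨inl i, Set.mem_range_self i, by simp⟩

theorem adj_inl_inl_add_one (hn : 2 ≤ n) (i : Fin n) :
    (whiskerCycle n).Adj (inl i) (inl (i + 1)) := by
  have hi : i ≠ i + 1 := by
    rw [ne_eq, left_eq_add, ← Fin.val_inj, Fin.val_one', Nat.mod_eq_of_lt hn]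
    exact one_ne_zero
  exact (SimpleGraph.fromRel_adj _ _ _).mpr
    ⟨by simpa using hi, Or.inl (Or.inl ⟨i, rfl, rfl⟩)⟩

theorem two_mul_ncard_le_of_isIndepSet (hn : 2 ≤ n) {I : Set (Fin n ⊕ Fin n)}
    (hIC : I ⊆ Set.range inl) (hI : (whiskerCycle n).IsIndepSet I) : 2 * I.ncard ≤ n := by
  obtain ⟨S, rfl⟩ := Set.subset_range_iff_exists_image_eq.mp hIC
  have hdisj : Disjoint S ((· + 1) '' S) := by
    refine Set.disjoint_left.mpr ?_
    rintro _ hS ⟨i, hi, rfl⟩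
    exact hI (Set.mem_image_of_mem inl hi) (Set.mem_image_of_mem inl hS)
      (by simpa using (adj_inl_inl_add_one hn i).ne) (adj_inl_inl_add_one hn i)
  simpa [Set.ncard_image_of_injective S inl_injective] using
    Set.two_mul_ncard_le_of_disjoint_image (add_left_injective 1) hdisj

end whiskerCycle

/-- every induced matching of `W(C_n)` has cardinality at most
`⌈(n-1)/2⌉`. -/
theorem inducedMatching_card_le (n : ℕ) [NeZero n] (hn : 3 ≤ n)
    (M : Set (Sym2 (Fin n ⊕ Fin n))) (hM : IsInducedMatching (whiskerCycle n) M) :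
    M.ncard ≤ ⌈((n : ℚ) - 1) / 2⌉₊ := by
  obtain ⟨I, hIC, hI, hIM⟩ := hM.exists_isIndepSet_subset_ncard_eq
    fun _ => whiskerCycle.exists_inl_mem_of_mem_edgeSet
  rw [← hIM]
  exact Nat.le_ceil_sub_one_div_two (whiskerCycle.two_mul_ncard_le_of_isIndepSet (by omega) hIC hI)
end

section
/- Let G = W(C_n) be a whiskered cycle with edge ideal I, and suppose n = 2m+1 is odd, 1 ≤ m ≤ s, and M = (x_1x_2)(x_3x_4)⋯(x_{2m-1}x_{2m})·N with N ∈ I^{s-m}. Then for every j with 1 ≤ j ≤ 2n, the monomial x_n x_j · M lies in I^{s+1}. -/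
/-!
Since `n = 2m + 1`, the monomial `x_n (x_1x_2)⋯(x_{2m-1}x_{2m})` is the full cycle monomial
`x_1⋯x_n`. Every vertex `x_j` has a neighbour `x_a` on the cycle, and reading the cycle from
`x_a` on writes `x_1⋯x_n = x_a (x_{a+1}x_{a+2})⋯(x_{a+2m-1}x_{a+2m})`, a product of `m` cycle
edges, so `x_j x_1⋯x_n ∈ I^{m+1}` and the `s - m` further edges in `N` finish the count.
-/

open MvPolynomial
open Fin.NatCast

/-- The edge ideal of a graph `G`. -/
noncomputable def edgeIdeal (K : Type*) [Field K] {V : Type*} (G : SimpleGraph V) :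
    Ideal (MvPolynomial V K) :=
  Ideal.span {m | ∃ u v, G.Adj u v ∧ m = X u * X v}

open Finset

theorem Finset.prod_range_two_mul {M : Type*} [CommMonoid M] (g : ℕ → M) (m : ℕ) :
    ∏ k ∈ range (2 * m), g k = ∏ t ∈ range m, g (2 * t) * g (2 * t + 1) := by
  induction m with
  | zero => simp
  | succ m ih =>
    rw [Nat.mul_succ, prod_range_succ, prod_range_succ, prod_range_succ, ih, mul_assoc]

theorem Fin.prod_univ_eq_prod_range_add {M : Type*} [CommMonoid M] {n : ℕ} [NeZero n]
    (f : Fin n → M) (a : Fin n) : ∏ i, f i = ∏ k ∈ range n, f (a + k) := by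
  rw [← Equiv.prod_comp (Equiv.addLeft a), ← Fin.prod_univ_eq_prod_range (fun k => f (a + k))]
  simp

theorem Ideal.prod_mem_pow_card {R ι : Type*} [CommSemiring R] {I : Ideal R} {s : Finset ι}
    {x : ι → R} (h : ∀ i ∈ s, x i ∈ I) : ∏ i ∈ s, x i ∈ I ^ #s := by
  simpa using Ideal.prod_mem_prod h

theorem X_mul_X_mem_edgeIdeal (K : Type*) [Field K] {V : Type*} {G : SimpleGraph V} {u v : V}
    (h : G.Adj u v) : (X u * X v : MvPolynomial V K) ∈ edgeIdeal K G :=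
  Ideal.subset_span ⟨u, v, h, rfl⟩

section WhiskerCycle

variable {n : ℕ} [NeZero n]

theorem whiskerCycle_adj_inl_succ (hn : 2 ≤ n) (i : Fin n) :
    (whiskerCycle n).Adj (Sum.inl i) (Sum.inl (i + 1)) := by
  refine ⟨?_, Or.inl (Or.inl ⟨i, rfl, rfl⟩)⟩
  have hone : (1 : Fin n) ≠ 0 := by
    rw [Ne, Fin.ext_iff, Fin.val_one', Fin.val_zero, Nat.mod_eq_of_lt (by omega)]
    exact one_ne_zero
  simpa using hone.symm

theorem whiskerCycle_adj_inr_inl (i : Fin n) :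
    (whiskerCycle n).Adj (Sum.inr i) (Sum.inl i) :=
  ⟨by simp, Or.inr (Or.inr ⟨i, rfl, rfl⟩)⟩

theorem whiskerCycle_exists_adj_inl (hn : 2 ≤ n) (v : Fin n ⊕ Fin n) :
    ∃ a, (whiskerCycle n).Adj v (Sum.inl a) := by
  cases v with
  | inl i => exact ⟨i + 1, whiskerCycle_adj_inl_succ hn i⟩
  | inr i => exact ⟨i, whiskerCycle_adj_inr_inl i⟩

theorem X_mul_prod_cycle_mem_edgeIdeal_pow (K : Type*) [Field K] {m : ℕ} (hn : n = 2 * m + 1)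
    (hm : 1 ≤ m) (v : Fin n ⊕ Fin n) :
    X v * ∏ i : Fin n, X (Sum.inl i) ∈ edgeIdeal K (whiskerCycle n) ^ (m + 1) := by
  obtain ⟨a, hva⟩ := whiskerCycle_exists_adj_inl (by omega) v
  have hpairs : ∏ t ∈ range m,
      X (Sum.inl (a + (2 * t + 1 : ℕ))) * X (Sum.inl (a + (2 * t + 1 + 1 : ℕ)))
      ∈ edgeIdeal K (whiskerCycle n) ^ m := by
    simpa only [card_range] using Ideal.prod_mem_pow_card (s := range m) fun t _ => by
      have hsucc : a + ((2 * t + 1 + 1 : ℕ) : Fin n) = a + ((2 * t + 1 : ℕ) : Fin n) + 1 := by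
        rw [Nat.cast_succ (2 * t + 1), add_assoc]
      exact hsucc ▸ X_mul_X_mem_edgeIdeal K (whiskerCycle_adj_inl_succ (by omega) _)
  rw [Fin.prod_univ_eq_prod_range_add _ a, show range n = range (2 * m + 1) by rw [hn],
    prod_range_succ', prod_range_two_mul, Nat.cast_zero, add_zero, mul_left_comm, pow_succ]
  exact Ideal.mul_mem_mul hpairs (X_mul_X_mem_edgeIdeal K hva)

end WhiskerCycle

/-- for `n = 2m+1` odd, `1 ≤ m ≤ s`, and
`M = (x_1x_2)(x_3x_4)⋯(x_{2m-1}x_{2m})·N` with `N ∈ I^{s-m}`, for every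
vertex `x_j` (`1 ≤ j ≤ 2n`) we have `x_n x_j · M ∈ I^{s+1}`. -/
theorem xn_mul_all_mem (K : Type*) [Field K] (n m s : ℕ) [NeZero n]
    (hn : n = 2 * m + 1) (hm : 1 ≤ m) (hms : m ≤ s)
    (N M : MvPolynomial (Fin n ⊕ Fin n) K)
    (hN : N ∈ edgeIdeal K (whiskerCycle n) ^ (s - m))
    (hM : M = (∏ t ∈ Finset.range m,
        X (Sum.inl ((2 * t : ℕ) : Fin n)) * X (Sum.inl ((2 * t + 1 : ℕ) : Fin n))) * N) :
    ∀ j : Fin n ⊕ Fin n,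
      X (Sum.inl ((n - 1 : ℕ) : Fin n)) * X j * M ∈
        edgeIdeal K (whiskerCycle n) ^ (s + 1) := by
  intro j
  have hcycle : X (Sum.inl ((n - 1 : ℕ) : Fin n)) * ∏ t ∈ range m,
      X (Sum.inl ((2 * t : ℕ) : Fin n)) * X (Sum.inl ((2 * t + 1 : ℕ) : Fin n))
      = ∏ i : Fin n, (X (Sum.inl i) : MvPolynomial (Fin n ⊕ Fin n) K) := by
    have hlast : ((n - 1 : ℕ) : Fin n) = ((2 * m : ℕ) : Fin n) := by
      congr 1
      omega
    rw [hlast, Fin.prod_univ_eq_prod_range_add _ 0, show range n = range (2 * m + 1) by rw [hn],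
      prod_range_succ, prod_range_two_mul, mul_comm]
    simp only [zero_add]
  have hprod := Ideal.mul_mem_mul (X_mul_prod_cycle_mem_edgeIdeal_pow K hn hm j) hN
  rw [← pow_add, show m + 1 + (s - m) = s + 1 by omega, ← hcycle] at hprod
  rw [hM]
  convert hprod using 1
  ring
end

section
/- Let I be the edge ideal of the whiskered cycle W(C_n), n ≥ 3, and let M be any product of s edge-monomials of W(C_n). If x_{n+i} x_{n+j} · M ∈ I^{s+1} for some 1 ≤ i, j ≤ n (with i ≠ j), then also x_{i+1} x_{n+j} · M ∈ I^{s+1}, x_{i-1} x_{n+j} · M ∈ I^{s+1}, x_{j+1} x_{n+i} · M ∈ I^{s+1}, and x_{j-1} x_{n+i} · M ∈ I^{s+1} (indices of cycle vertices taken mod n). -/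
open MvPolynomial

/-!
Powers of an edge ideal are monomial ideals, so a polynomial lies in `I^k` exactly when each of
its monomials is divisible by a product of `k` edges. The whisker vertex `x_{n+i}` is a leaf whose
only edge is `x_i x_{n+i}`; trading that edge for the cycle edge `x_i x_{i±1}` turns such a divisor
of a monomial of `x_{n+i} · p` into one of `x_{i±1} · p`, while a divisor avoiding `x_{n+i}`
already divides `p`.
-/

open Pointwise

namespace MvPolynomial

variable {σ R : Type*} [CommSemiring R]

-- With `Pointwise` open, `k • D` is the `k`-fold sumset `D + ⋯ + D`, not a dilate of `D`.
theorem span_monomial_pow (D : Set (σ →₀ ℕ)) (k : ℕ) :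
    Ideal.span ((monomial · (1 : R)) '' D) ^ k = Ideal.span ((monomial · (1 : R)) '' (k • D)) := by
  induction k with
  | zero => simp [Ideal.one_eq_top]
  | succ k ih =>
    rw [pow_succ, ih, Ideal.span_mul_span', succ_nsmul]
    congr 1
    ext p
    simp only [Set.mem_mul, Set.mem_add, Set.mem_image]
    constructor
    · rintro ⟨_, ⟨E, hE, rfl⟩, _, ⟨a, ha, rfl⟩, rfl⟩
      exact ⟨E + a, ⟨E, hE, a, ha, rfl⟩, by rw [monomial_mul, one_mul]⟩
    · rintro ⟨_, ⟨E, hE, a, ha, rfl⟩, rfl⟩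
      exact ⟨_, ⟨E, hE, rfl⟩, _, ⟨a, ha, rfl⟩, by rw [monomial_mul, one_mul]⟩

theorem X_mul_mem_span_monomial_of_exchange {S : Set (σ →₀ ℕ)} {w u : σ}
    (hS : ∀ E ∈ S, ∀ d, E ≤ Finsupp.single w 1 + d → ∃ E' ∈ S, E' ≤ Finsupp.single u 1 + d)
    {p : MvPolynomial σ R} (hp : X w * p ∈ Ideal.span ((monomial · (1 : R)) '' S)) :
    X u * p ∈ Ideal.span ((monomial · (1 : R)) '' S) := by
  simp only [mem_ideal_span_monomial_image, support_X_mul, Finset.mem_map,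
    addLeftEmbedding_apply, forall_exists_index, and_imp, forall_apply_eq_imp_iff₂] at hp ⊢
  intro d hd
  obtain ⟨E, hE, hEd⟩ := hp d hd
  exact hS E hE d hEd

end MvPolynomial

namespace Finsupp

variable {σ : Type*}

theorem exists_mem_nsmul_le_single_add {D : Set (σ →₀ ℕ)} {w u : σ}
    (hD : ∀ a ∈ D, a w ≠ 0 → ∃ a' ∈ D, a' + single w 1 = a + single u 1) (k : ℕ) :
    ∀ E ∈ k • D, ∀ d, E ≤ single w 1 + d → ∃ E' ∈ k • D, E' ≤ single u 1 + d := by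
  induction k with
  | zero => exact fun _ _ _ _ => ⟨0, Set.zero_mem_zero, zero_le⟩
  | succ k ih =>
    rintro _ ⟨E, hE, a, ha, rfl⟩ d hle
    by_cases haw : a w = 0
    · have had : a ≤ d := fun x => by
        have hax : a x ≤ single w 1 x + d x := le_add_self.trans (hle x)
        rcases eq_or_ne x w with rfl | hx
        · simp [haw]
        · simpa [single_apply, Ne.symm hx] using hax
      obtain ⟨E', hE', hle'⟩ := ih E hE (d - a) <| by
        rw [← add_le_add_iff_right a, add_assoc, tsub_add_cancel_of_le had]
        exact hle
      refine ⟨E' + a, Set.add_mem_add hE' ha, ?_⟩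
      calc E' + a ≤ single u 1 + (d - a) + a := add_le_add_left hle' a
        _ = single u 1 + d := by rw [add_assoc, tsub_add_cancel_of_le had]
    · obtain ⟨a', ha', hswap⟩ := hD a ha haw
      refine ⟨E + a', Set.add_mem_add hE ha', ?_⟩
      rw [← add_le_add_iff_right (single w 1)]
      calc E + a' + single w 1 = E + a + single u 1 := by rw [add_assoc, hswap, add_assoc]
        _ ≤ single w 1 + d + single u 1 := add_le_add_left hle _
        _ = single u 1 + d + single w 1 := by
          rw [add_comm (single w 1), add_right_comm, add_comm d]

end Finsupp

namespace SimpleGraph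

variable {V : Type*} (G : SimpleGraph V)

def edgeExponents : Set (V →₀ ℕ) :=
  {d | ∃ u v, G.Adj u v ∧ d = Finsupp.single u 1 + Finsupp.single v 1}

theorem edgeIdeal_eq_span_monomial (K : Type*) [Field K] :
    edgeIdeal K G = Ideal.span ((monomial · (1 : K)) '' G.edgeExponents) := by
  unfold edgeIdeal edgeExponents
  congr 1
  ext m
  constructor
  · rintro ⟨u, v, huv, rfl⟩
    exact ⟨_, ⟨u, v, huv, rfl⟩, by simp [X, monomial_mul]⟩
  · rintro ⟨d, ⟨u, v, huv, rfl⟩, rfl⟩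
    exact ⟨u, v, huv, by simp [X, monomial_mul]⟩

variable {G}

theorem exists_edgeExponents_swap_of_leaf {v w u : V} (hw : ∀ x, G.Adj w x → x = v)
    (hvu : G.Adj v u) {a : V →₀ ℕ} (ha : a ∈ G.edgeExponents) (haw : a w ≠ 0) :
    ∃ a' ∈ G.edgeExponents, a' + Finsupp.single w 1 = a + Finsupp.single u 1 := by
  obtain ⟨x, y, hxy, rfl⟩ := ha
  refine ⟨_, ⟨v, u, hvu, rfl⟩, ?_⟩
  have hxy_w : x = w ∨ y = w := by
    by_contra! hne
    simp [hne.1, hne.2] at haw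
  rcases hxy_w with rfl | rfl
  · rw [hw y hxy]; abel
  · rw [hw x hxy.symm]; abel

theorem X_mul_mem_edgeIdeal_pow_of_leaf {K : Type*} [Field K] {v w u : V}
    (hw : ∀ x, G.Adj w x → x = v) (hvu : G.Adj v u) {k : ℕ} {p : MvPolynomial V K}
    (hp : X w * p ∈ edgeIdeal K G ^ k) : X u * p ∈ edgeIdeal K G ^ k := by
  rw [edgeIdeal_eq_span_monomial, span_monomial_pow] at hp ⊢
  exact X_mul_mem_span_monomial_of_exchange
    (Finsupp.exists_mem_nsmul_le_single_add
      (fun _ ha haw => exists_edgeExponents_swap_of_leaf hw hvu ha haw) k) hp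

end SimpleGraph

section whiskerCycle

variable {n : ℕ} [NeZero n]

theorem eq_inl_of_whiskerCycle_adj_inr {i : Fin n} {x : Fin n ⊕ Fin n}
    (h : (whiskerCycle n).Adj (Sum.inr i) x) : x = Sum.inl i := by
  obtain ⟨-, (⟨j, h₁, h₂⟩ | ⟨j, h₁, h₂⟩) | (⟨j, h₁, h₂⟩ | ⟨j, h₁, h₂⟩)⟩ := h <;> simp_all

theorem whiskerCycle_adj_succ (hn : 1 < n) (i : Fin n) :
    (whiskerCycle n).Adj (Sum.inl i) (Sum.inl (i + 1)) := by
  refine ⟨fun h => ?_, Or.inl (Or.inl ⟨i, rfl, rfl⟩)⟩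
  have : (1 : Fin n) = 0 := by simpa using Sum.inl.inj h
  rw [Fin.one_eq_zero_iff] at this
  omega

theorem whiskerCycle_adj_pred (hn : 1 < n) (i : Fin n) :
    (whiskerCycle n).Adj (Sum.inl i) (Sum.inl (i - 1)) := by
  simpa using (whiskerCycle_adj_succ hn (i - 1)).symm

end whiskerCycle

theorem whisker_pair_mem_shift_general (K : Type*) [Field K] (n s : ℕ) [NeZero n]
    (hn : 3 ≤ n) (M : MvPolynomial (Fin n ⊕ Fin n) K) (i j : Fin n)
    (h : X (Sum.inr i) * X (Sum.inr j) * M ∈ edgeIdeal K (whiskerCycle n) ^ (s + 1)) :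
    X (Sum.inl (i + 1)) * X (Sum.inr j) * M ∈ edgeIdeal K (whiskerCycle n) ^ (s + 1) ∧
    X (Sum.inl (i - 1)) * X (Sum.inr j) * M ∈ edgeIdeal K (whiskerCycle n) ^ (s + 1) ∧
    X (Sum.inl (j + 1)) * X (Sum.inr i) * M ∈ edgeIdeal K (whiskerCycle n) ^ (s + 1) ∧
    X (Sum.inl (j - 1)) * X (Sum.inr i) * M ∈ edgeIdeal K (whiskerCycle n) ^ (s + 1) := by
  have hn' : 1 < n := by omega
  have shift : ∀ {a c : Fin n} {p : MvPolynomial (Fin n ⊕ Fin n) K},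
      (whiskerCycle n).Adj (Sum.inl a) (Sum.inl c) →
      X (Sum.inr a) * p ∈ edgeIdeal K (whiskerCycle n) ^ (s + 1) →
      X (Sum.inl c) * p ∈ edgeIdeal K (whiskerCycle n) ^ (s + 1) :=
    fun hac => SimpleGraph.X_mul_mem_edgeIdeal_pow_of_leaf
      (fun _ => eq_inl_of_whiskerCycle_adj_inr) hac
  have hi : X (Sum.inr i) * (X (Sum.inr j) * M) ∈ edgeIdeal K (whiskerCycle n) ^ (s + 1) := by
    rwa [← mul_assoc]
  have hj : X (Sum.inr j) * (X (Sum.inr i) * M) ∈ edgeIdeal K (whiskerCycle n) ^ (s + 1) := by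
    rwa [mul_left_comm]
  simp only [mul_assoc]
  exact ⟨shift (whiskerCycle_adj_succ hn' i) hi, shift (whiskerCycle_adj_pred hn' i) hi,
    shift (whiskerCycle_adj_succ hn' j) hj, shift (whiskerCycle_adj_pred hn' j) hj⟩

/-- let `M` be a product of `s` edge-monomials of `W(C_n)`.
If `x_{n+i} x_{n+j} · M ∈ I^{s+1}` for whisker vertices `x_{n+i} ≠ x_{n+j}`,
then also `x_{i+1} x_{n+j} · M`, `x_{i-1} x_{n+j} · M`, `x_{j+1} x_{n+i} · M`
and `x_{j-1} x_{n+i} · M` lie in `I^{s+1}` (cycle indices mod `n`). -/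
theorem whisker_pair_mem_shift (K : Type*) [Field K] (n s : ℕ) [NeZero n]
    (hn : 3 ≤ n) (e : Fin s → (Fin n ⊕ Fin n) × (Fin n ⊕ Fin n))
    (he : ∀ t, (whiskerCycle n).Adj (e t).1 (e t).2)
    (M : MvPolynomial (Fin n ⊕ Fin n) K)
    (hM : M = ∏ t, X (e t).1 * X (e t).2)
    (i j : Fin n) (hij : i ≠ j)
    (h : X (Sum.inr i) * X (Sum.inr j) * M ∈ edgeIdeal K (whiskerCycle n) ^ (s + 1)) :
    X (Sum.inl (i + 1)) * X (Sum.inr j) * M ∈ edgeIdeal K (whiskerCycle n) ^ (s + 1) ∧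
    X (Sum.inl (i - 1)) * X (Sum.inr j) * M ∈ edgeIdeal K (whiskerCycle n) ^ (s + 1) ∧
    X (Sum.inl (j + 1)) * X (Sum.inr i) * M ∈ edgeIdeal K (whiskerCycle n) ^ (s + 1) ∧
    X (Sum.inl (j - 1)) * X (Sum.inr i) * M ∈ edgeIdeal K (whiskerCycle n) ^ (s + 1) :=
  whisker_pair_mem_shift_general K n s hn M i j h
end
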